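/- Let (w_1,…,w_N; v_1,…,v_N; W; K) be a Knapsack instance with unit-items, i.e., with positive integer weights and values such that at least W of the items satisfy w_i = v_i = 1, and let G be the associated concurrent-move game tree (with M the smallest integer satisfying M > W·N·v_i and M > N·w_i for all i). Then the leader's Stackelberg value of G in behavioral strategies equals max{ Σ_{i∈J} v_i : J ⊆ {1,…,N}, Σ_{i∈J} w_i ≤ W }. -/

import Mathlib

open scoped BigOperators

noncomputable section

namespace KnapsackGame

/-- A behavioral strategy of the leader in the concurrent-move game tree associated with a
Knapsack instance with `N` items: `q i` is the probability of root action `l_i`, and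
`r i` is the probability of action `⊕` in the subgame `I_i`. -/
structure LStrat (N : ℕ) where
  q : Fin N → ℝ
  r : Fin N → ℝ

/-- A behavioral strategy of the follower: `g 0` is the probability of root action `f_0`,
`g k.succ` the probability of `f_{k+1}`, and `s i` the probability of `L` in subgame `I_i`. -/
structure FStrat (N : ℕ) where
  g : Fin (N + 1) → ℝ
  s : Fin N → ℝ

/-- Validity of a leader behavioral strategy. -/
def LValid {N : ℕ} (σ : LStrat N) : Prop :=
  (∀ i, 0 ≤ σ.q i) ∧ (∑ i, σ.q i) = 1 ∧ ∀ i, 0 ≤ σ.r i ∧ σ.r i ≤ 1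

/-- Validity of a follower behavioral strategy. -/
def FValid {N : ℕ} (τ : FStrat N) : Prop :=
  (∀ k, 0 ≤ τ.g k) ∧ (∑ k, τ.g k) = 1 ∧ ∀ i, 0 ≤ τ.s i ∧ τ.s i ≤ 1

/-- The leader's expected utility in the subgame `I_i`:
`(⊕,L) ↦ N·v i`, `(⊕,R) ↦ 0`, `(⊖,L) ↦ N·v i`, `(⊖,R) ↦ 0`. -/
def subEU1 (N : ℕ) (v : Fin N → ℕ) (σ : LStrat N) (τ : FStrat N) (i : Fin N) : ℝ :=
  σ.r i * (τ.s i * ((N : ℝ) * (v i : ℝ)) + (1 - τ.s i) * 0) +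
    (1 - σ.r i) * (τ.s i * ((N : ℝ) * (v i : ℝ)) + (1 - τ.s i) * 0)

/-- The follower's expected utility in the subgame `I_i`:
`(⊕,L) ↦ -N·w i`, `(⊕,R) ↦ -N·w i`, `(⊖,L) ↦ -N·w i`, `(⊖,R) ↦ 0`. -/
def subEU2 (N : ℕ) (w : Fin N → ℕ) (σ : LStrat N) (τ : FStrat N) (i : Fin N) : ℝ :=
  σ.r i * (τ.s i * (-((N : ℝ) * (w i : ℝ))) + (1 - τ.s i) * (-((N : ℝ) * (w i : ℝ)))) +
    (1 - σ.r i) * (τ.s i * (-((N : ℝ) * (w i : ℝ))) + (1 - τ.s i) * 0)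

/-- The leader's expected utility in the whole game: terminal payoffs after `f_k`, `k ≥ 1`,
give the leader `0`. -/
def EU1 (N : ℕ) (v : Fin N → ℕ) (σ : LStrat N) (τ : FStrat N) : ℝ :=
  τ.g 0 * (∑ i, σ.q i * subEU1 N v σ τ i) +
    ∑ k : Fin N, τ.g k.succ * (∑ i, σ.q i * (0 : ℝ))

/-- The follower's expected utility in the whole game: after root actions `(l_i, f_{k+1})`
the follower gets `N·M − W − M` if `i = k` and `−W − M` otherwise. -/
def EU2 (N : ℕ) (w : Fin N → ℕ) (W M : ℕ) (σ : LStrat N) (τ : FStrat N) : ℝ :=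
  τ.g 0 * (∑ i, σ.q i * subEU2 N w σ τ i) +
    ∑ k : Fin N, τ.g k.succ *
      (∑ i, σ.q i *
        (if i = k then (N : ℝ) * (M : ℝ) - (W : ℝ) - (M : ℝ) else -(W : ℝ) - (M : ℝ)))

/-- `τ` is a best response of the follower to the leader strategy `σ`. -/
def BestResponse (N : ℕ) (w : Fin N → ℕ) (W M : ℕ) (σ : LStrat N) (τ : FStrat N) : Prop :=
  FValid τ ∧ ∀ τ' : FStrat N, FValid τ' → EU2 N w W M σ τ' ≤ EU2 N w W M σ τ

/-- The optimal value of the Knapsack instance. -/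
def knapsackOpt (N W : ℕ) (w v : Fin N → ℕ) : ℕ :=
  (Finset.univ.filter fun J : Finset (Fin N) => (∑ i ∈ J, w i) ≤ W).sup
    fun J => ∑ i ∈ J, v i


section Helpers

variable {N : ℕ}

private lemma subEU1_eq (v : Fin N → ℕ) (σ : LStrat N) (τ : FStrat N) (i : Fin N) :
    subEU1 N v σ τ i = τ.s i * ((N : ℝ) * (v i : ℝ)) := by
  unfold subEU1; ring

private lemma subEU2_eq (w : Fin N → ℕ) (σ : LStrat N) (τ : FStrat N) (i : Fin N) :
    subEU2 N w σ τ i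
      = -(((N : ℝ) * (w i : ℝ)) * (σ.r i + (1 - σ.r i) * τ.s i)) := by
  unfold subEU2; ring

private lemma EU1_eq (v : Fin N → ℕ) (σ : LStrat N) (τ : FStrat N) :
    EU1 N v σ τ = τ.g 0 * ∑ i, σ.q i * (τ.s i * ((N : ℝ) * (v i : ℝ))) := by
  unfold EU1
  simp [subEU1_eq]

private lemma inner_sum_eq (W M : ℕ) (q : Fin N → ℝ) (hq : ∑ i, q i = 1) (k : Fin N) :
    (∑ i, q i * (if i = k then (N : ℝ) * (M : ℝ) - (W : ℝ) - (M : ℝ)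
        else -(W : ℝ) - (M : ℝ)))
      = q k * ((N : ℝ) * (M : ℝ)) - (W : ℝ) - (M : ℝ) := by
  have h : ∀ i ∈ Finset.univ, q i * (if i = k then (N : ℝ) * (M : ℝ) - (W : ℝ) - (M : ℝ)
        else -(W : ℝ) - (M : ℝ))
      = q i * (-(W : ℝ) - (M : ℝ)) + (if i = k then q i * ((N : ℝ) * (M : ℝ)) else 0) := by
    intro i _
    by_cases h : i = k <;> simp [h] <;> ring
  rw [Finset.sum_congr rfl h, Finset.sum_add_distrib, ← Finset.sum_mul, hq,
    Finset.sum_ite_eq' Finset.univ k]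
  simp only [Finset.mem_univ, if_true, one_mul]
  ring

private lemma EU2_eq (w : Fin N → ℕ) (W M : ℕ) (σ : LStrat N) (τ : FStrat N)
    (hq : ∑ i, σ.q i = 1) :
    EU2 N w W M σ τ
      = τ.g 0 * ∑ i, σ.q i * (-(((N : ℝ) * (w i : ℝ)) * (σ.r i + (1 - σ.r i) * τ.s i)))
        + ∑ k : Fin N, τ.g k.succ * (σ.q k * ((N : ℝ) * (M : ℝ)) - (W : ℝ) - (M : ℝ)) := by
  unfold EU2
  congr 1
  · congr 1
    exact Finset.sum_congr rfl fun i _ => by rw [subEU2_eq]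
  · exact Finset.sum_congr rfl fun k _ => by rw [inner_sum_eq W M σ.q hq k]

end Helpers


private lemma achieve (N W M : ℕ) (hN : 0 < N) (w v : Fin N → ℕ)
    (J : Finset (Fin N)) (hJ : (∑ i ∈ J, w i) ≤ W) :
    ∃ (σ : LStrat N) (τ : FStrat N),
      LValid σ ∧ BestResponse N w W M σ τ ∧
        EU1 N v σ τ = ((∑ i ∈ J, v i : ℕ) : ℝ) := by
  classical
  have hN0 : ((N : ℝ)) ≠ 0 := Nat.cast_ne_zero.mpr hN.ne'
  set σ : LStrat N := ⟨fun _ => (N : ℝ)⁻¹, fun i => if i ∈ J then 1 else 0⟩ with hσdef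
  set τ : FStrat N := ⟨fun k => if k = 0 then 1 else 0, fun i => if i ∈ J then 1 else 0⟩
    with hτdef
  have hqdef : ∀ i, σ.q i = (N : ℝ)⁻¹ := fun i => rfl
  have hrdef : ∀ i, σ.r i = (if i ∈ J then (1 : ℝ) else 0) := fun i => rfl
  have hsdef : ∀ i, τ.s i = (if i ∈ J then (1 : ℝ) else 0) := fun i => rfl
  have hgdef : ∀ k, τ.g k = (if k = 0 then (1 : ℝ) else 0) := fun k => rfl
  have hqsum : ∑ i, σ.q i = 1 := by
    simp only [hqdef, Finset.sum_const, Finset.card_univ, Fintype.card_fin, nsmul_eq_mul]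
    field_simp
  have hLV : LValid σ := by
    refine ⟨fun i => by rw [hqdef]; positivity, hqsum, fun i => ?_⟩
    rw [hrdef]
    split <;> norm_num
  have hFV : FValid τ := by
    refine ⟨fun k => by rw [hgdef]; split <;> norm_num, ?_, fun i => ?_⟩
    · simp only [hgdef]
      rw [Finset.sum_ite_eq' Finset.univ (0 : Fin (N + 1)) (fun _ => (1 : ℝ))]
      simp
    · rw [hsdef]; split <;> norm_num
  have hJw : ∀ (s' : Fin N → ℝ), (∀ i, 0 ≤ s' i) →
      ∀ i : Fin N,
        σ.q i * (-(((N : ℝ) * (w i : ℝ)) * (σ.r i + (1 - σ.r i) * s' i)))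
          ≤ (if i ∈ J then -(w i : ℝ) else 0) := by
    intro s' hs' i
    by_cases h : i ∈ J
    · rw [hqdef, hrdef]
      simp only [if_pos h]
      have he : (N : ℝ)⁻¹ * (-(((N : ℝ) * (w i : ℝ)) * (1 + (1 - 1) * s' i)))
          = -(w i : ℝ) := by field_simp; try ring
      rw [he]
    · rw [hqdef, hrdef]
      simp only [if_neg h]
      have h1 : 0 ≤ (N : ℝ)⁻¹ * (((N : ℝ) * (w i : ℝ)) * (0 + (1 - 0) * s' i)) := by
        have := hs' i; positivity
      rw [mul_neg]
      exact neg_nonpos.mpr h1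
  have hterm : ∀ i : Fin N,
      σ.q i * (-(((N : ℝ) * (w i : ℝ)) * (σ.r i + (1 - σ.r i) * τ.s i)))
        = (if i ∈ J then -(w i : ℝ) else 0) := by
    intro i
    by_cases h : i ∈ J
    · rw [hqdef, hrdef, hsdef]
      simp only [if_pos h]
      field_simp
      try ring
    · rw [hqdef, hrdef, hsdef]
      simp only [if_neg h]
      ring
  have hEU2τ : EU2 N w W M σ τ = -((∑ i ∈ J, w i : ℕ) : ℝ) := by
    rw [EU2_eq w W M σ τ hqsum]
    have h0 : τ.g 0 = 1 := by rw [hgdef]; simp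
    have h2 : ∀ k : Fin N, τ.g k.succ = 0 := fun k => by
      rw [hgdef]; exact if_neg (Fin.succ_ne_zero k)
    have hsecond : ∑ k : Fin N, τ.g k.succ * (σ.q k * ((N : ℝ) * (M : ℝ)) - (W : ℝ) - (M : ℝ)) = 0 :=
      Finset.sum_eq_zero fun k _ => by rw [h2 k, zero_mul]
    rw [hsecond, add_zero, Finset.sum_congr rfl fun i _ => hterm i, h0, one_mul,
      Finset.sum_ite_mem, Finset.univ_inter, Nat.cast_sum, ← Finset.sum_neg_distrib]
  refine ⟨σ, τ, hLV, ⟨hFV, ?_⟩, ?_⟩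
  · -- best response
    intro τ' hτ'
    obtain ⟨hg0', hg1', hs'⟩ := hτ'
    rw [hEU2τ, EU2_eq w W M σ τ' hqsum]
    have hA : ∑ i, σ.q i * (-(((N : ℝ) * (w i : ℝ)) * (σ.r i + (1 - σ.r i) * τ'.s i)))
        ≤ -((∑ i ∈ J, w i : ℕ) : ℝ) := by
      calc ∑ i, σ.q i * (-(((N : ℝ) * (w i : ℝ)) * (σ.r i + (1 - σ.r i) * τ'.s i)))
          ≤ ∑ i, (if i ∈ J then -(w i : ℝ) else 0) :=
            Finset.sum_le_sum fun i _ => hJw τ'.s (fun i => (hs' i).1) i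
        _ = -((∑ i ∈ J, w i : ℕ) : ℝ) := by
            rw [Finset.sum_ite_mem, Finset.univ_inter, Nat.cast_sum,
              ← Finset.sum_neg_distrib]
    have hB : ∀ k : Fin N, σ.q k * ((N : ℝ) * (M : ℝ)) - (W : ℝ) - (M : ℝ)
        ≤ -((∑ i ∈ J, w i : ℕ) : ℝ) := by
      intro k
      have he : σ.q k * ((N : ℝ) * (M : ℝ)) = (M : ℝ) := by
        rw [hqdef]; field_simp
      rw [he]
      have : ((∑ i ∈ J, w i : ℕ) : ℝ) ≤ (W : ℝ) := by exact_mod_cast hJ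
      linarith
    have hgsum : τ'.g 0 + ∑ k : Fin N, τ'.g k.succ = 1 := by
      rw [← Fin.sum_univ_succ (f := τ'.g)]; exact hg1'
    calc τ'.g 0 * ∑ i, σ.q i * (-(((N : ℝ) * (w i : ℝ)) * (σ.r i + (1 - σ.r i) * τ'.s i)))
          + ∑ k : Fin N, τ'.g k.succ * (σ.q k * ((N : ℝ) * (M : ℝ)) - (W : ℝ) - (M : ℝ))
        ≤ τ'.g 0 * (-((∑ i ∈ J, w i : ℕ) : ℝ))
          + ∑ k : Fin N, τ'.g k.succ * (-((∑ i ∈ J, w i : ℕ) : ℝ)) :=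
          add_le_add (mul_le_mul_of_nonneg_left hA (hg0' 0))
            (Finset.sum_le_sum fun k _ =>
              mul_le_mul_of_nonneg_left (hB k) (hg0' k.succ))
      _ = -((∑ i ∈ J, w i : ℕ) : ℝ) := by
          rw [← Finset.sum_mul, ← add_mul, hgsum, one_mul]
  · -- EU1 value
    rw [EU1_eq]
    have h0 : τ.g 0 = 1 := by rw [hgdef]; simp
    have hv1 : ∀ i : Fin N, σ.q i * (τ.s i * ((N : ℝ) * (v i : ℝ)))
        = (if i ∈ J then (v i : ℝ) else 0) := by
      intro i
      by_cases h : i ∈ J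
      · rw [hqdef, hsdef]
        simp only [if_pos h]
        field_simp
        try ring
      · rw [hqdef, hsdef]
        simp only [if_neg h]
        ring
    rw [h0, one_mul, Finset.sum_congr rfl fun i _ => hv1 i,
      Finset.sum_ite_mem, Finset.univ_inter, Nat.cast_sum]


set_option maxHeartbeats 1000000 in
private lemma EU1_le_opt (N W M : ℕ) (hN : 0 < N) (w v : Fin N → ℕ)
    (hw : ∀ i, 0 < w i) (hv : ∀ i, 0 < v i)
    (hunit : W ≤ (Finset.univ.filter fun i => w i = 1 ∧ v i = 1).card)
    (hM : ∀ i, W * N * v i < M ∧ N * w i < M)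
    (σ : LStrat N) (τ : FStrat N) (hσ : LValid σ) (hτ : BestResponse N w W M σ τ) :
    EU1 N v σ τ ≤ ((knapsackOpt N W w v : ℕ) : ℝ) := by
  classical
  obtain ⟨hq0, hq1, hr⟩ := hσ
  obtain ⟨⟨hg0, hg1, hs⟩, hbr⟩ := hτ
  have hfeas : ∀ J : Finset (Fin N), (∑ i ∈ J, w i) ≤ W →
      ((∑ i ∈ J, v i : ℕ) : ℝ) ≤ ((knapsackOpt N W w v : ℕ) : ℝ) := by
    intro J hJ
    have : (∑ i ∈ J, v i) ≤ knapsackOpt N W w v :=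
      Finset.le_sup (f := fun J : Finset (Fin N) => ∑ i ∈ J, v i)
        (Finset.mem_filter.mpr ⟨Finset.mem_univ _, hJ⟩)
    exact_mod_cast this
  have hopt0 : (0:ℝ) ≤ ((knapsackOpt N W w v : ℕ) : ℝ) := Nat.cast_nonneg _
  rcases eq_or_lt_of_le (hg0 0) with hg0z | hg0pos
  · rw [EU1_eq, ← hg0z, zero_mul]
    exact hopt0
  -- main case : the follower plays f₀ with positive probability
  have i₀ : Fin N := ⟨0, hN⟩
  have hNR : (0:ℝ) < (N:ℝ) := by exact_mod_cast hN
  have hMpos : 0 < M := lt_of_le_of_lt (Nat.zero_le _) (hM i₀).2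
  have hMR : (0:ℝ) < (M:ℝ) := by exact_mod_cast hMpos
  -- Step 1 : in a best response, s i > 0 forces r i = 1 (on the support of q)
  have hstep1 : ∀ i, σ.q i * ((1 - σ.r i) * τ.s i) = 0 := by
    intro i
    set s' : Fin N → ℝ := fun j => if j = i then 0 else τ.s j with hs'def
    set τ' : FStrat N := ⟨τ.g, s'⟩ with hτ'def
    have hFV' : FValid τ' := by
      refine ⟨hg0, hg1, fun j => ?_⟩
      show 0 ≤ s' j ∧ s' j ≤ 1
      rw [hs'def]
      dsimp only
      split
      · norm_num
      · exact hs j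
    have hle := hbr τ' hFV'
    rw [EU2_eq w W M σ τ hq1, EU2_eq w W M σ τ' hq1] at hle
    rw [show τ'.g = τ.g from rfl] at hle
    have hle2 : τ.g 0 * (∑ j, σ.q j * (-(((N:ℝ) * (w j:ℝ)) * (σ.r j + (1 - σ.r j) * τ'.s j))))
        ≤ τ.g 0 * (∑ j, σ.q j * (-(((N:ℝ) * (w j:ℝ)) * (σ.r j + (1 - σ.r j) * τ.s j)))) := by
      linarith
    have hle3 := (mul_le_mul_iff_right₀ hg0pos).mp hle2
    have hdiff : (∑ j, σ.q j * (-(((N:ℝ) * (w j:ℝ)) * (σ.r j + (1 - σ.r j) * τ.s j))))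
        - (∑ j, σ.q j * (-(((N:ℝ) * (w j:ℝ)) * (σ.r j + (1 - σ.r j) * τ'.s j))))
        = -(((N:ℝ) * (w i:ℝ)) * (σ.q i * ((1 - σ.r i) * τ.s i))) := by
      rw [← Finset.sum_sub_distrib]
      rw [Finset.sum_eq_single_of_mem i (Finset.mem_univ i)]
      · have h0 : τ'.s i = 0 := by rw [hτ'def]; show s' i = 0; rw [hs'def]; simp
        rw [h0]; ring
      · intro j _ hj
        have h0 : τ'.s j = τ.s j := by rw [hτ'def]; show s' j = τ.s j; rw [hs'def]; simp [hj]
        rw [h0]; ring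
    have hX : ((N:ℝ) * (w i:ℝ)) * (σ.q i * ((1 - σ.r i) * τ.s i)) ≤ 0 := by linarith
    have hX0 : 0 ≤ σ.q i * ((1 - σ.r i) * τ.s i) :=
      mul_nonneg (hq0 i) (mul_nonneg (by linarith [(hr i).2]) (hs i).1)
    have hNw : (0:ℝ) < (N:ℝ) * (w i:ℝ) := by
      have : (0:ℝ) < (w i:ℝ) := by exact_mod_cast hw i
      positivity
    nlinarith [hX, hX0, hNw]
  -- abbreviation for the f₀-value of the follower
  have hgsum : τ.g 0 + ∑ k : Fin N, τ.g k.succ = 1 := by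
    rw [← Fin.sum_univ_succ (f := τ.g)]; exact hg1
  -- Step 2 : every B k is at most the f₀-value A
  have hBA : ∀ k : Fin N, σ.q k * ((N:ℝ) * (M:ℝ)) - (W:ℝ) - (M:ℝ)
      ≤ ∑ j, σ.q j * (-(((N:ℝ) * (w j:ℝ)) * (σ.r j + (1 - σ.r j) * τ.s j))) := by
    have hA_le : (∑ j, σ.q j * (-(((N:ℝ) * (w j:ℝ)) * (σ.r j + (1 - σ.r j) * τ.s j))))
        ≤ EU2 N w W M σ τ := by
      set τ0 : FStrat N := ⟨fun k => if k = 0 then 1 else 0, τ.s⟩ with hτ0def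
      have hFV0 : FValid τ0 := by
        refine ⟨fun k => ?_, ?_, hs⟩
        · show (0:ℝ) ≤ if k = 0 then 1 else 0
          split <;> norm_num
        · show (∑ k : Fin (N+1), if k = 0 then (1:ℝ) else 0) = 1
          rw [Finset.sum_ite_eq' Finset.univ (0 : Fin (N + 1)) (fun _ => (1 : ℝ))]
          simp
      have hle := hbr τ0 hFV0
      rw [EU2_eq w W M σ τ0 hq1] at hle
      rw [show τ0.s = τ.s from rfl] at hle
      have hg00 : τ0.g 0 = 1 := by rw [hτ0def]; simp
      have hg0k : ∀ k : Fin N, τ0.g k.succ = 0 := fun k => by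
        show (if k.succ = (0 : Fin (N+1)) then (1:ℝ) else 0) = 0
        exact if_neg (Fin.succ_ne_zero k)
      have hzero2 : ∑ k : Fin N, τ0.g k.succ * (σ.q k * ((N:ℝ)*(M:ℝ)) - (W:ℝ) - (M:ℝ)) = 0 :=
        Finset.sum_eq_zero fun k _ => by rw [hg0k k, zero_mul]
      rw [hg00, one_mul, hzero2, add_zero] at hle
      exact hle
    have hB_le : ∀ k : Fin N, σ.q k * ((N:ℝ) * (M:ℝ)) - (W:ℝ) - (M:ℝ) ≤ EU2 N w W M σ τ := by
      intro k
      set τk : FStrat N := ⟨fun j => if j = k.succ then 1 else 0, τ.s⟩ with hτkdef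
      have hFVk : FValid τk := by
        refine ⟨fun j => ?_, ?_, hs⟩
        · show (0:ℝ) ≤ if j = k.succ then 1 else 0
          split <;> norm_num
        · show (∑ j : Fin (N+1), if j = k.succ then (1:ℝ) else 0) = 1
          rw [Finset.sum_ite_eq' Finset.univ (k.succ : Fin (N + 1)) (fun _ => (1 : ℝ))]
          simp
      have hle := hbr τk hFVk
      rw [EU2_eq w W M σ τk hq1] at hle
      have hg00 : τk.g 0 = 0 := by
        show (if (0 : Fin (N+1)) = k.succ then (1:ℝ) else 0) = 0
        exact if_neg (Ne.symm (Fin.succ_ne_zero k))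
      have hg0k : ∀ k' : Fin N, τk.g k'.succ = (if k' = k then (1:ℝ) else 0) := fun k' => by
        show (if k'.succ = k.succ then (1:ℝ) else 0) = _
        simp [Fin.succ_inj]
      have hsum2 : ∑ k' : Fin N, τk.g k'.succ * (σ.q k' * ((N:ℝ)*(M:ℝ)) - (W:ℝ) - (M:ℝ))
          = σ.q k * ((N:ℝ)*(M:ℝ)) - (W:ℝ) - (M:ℝ) := by
        rw [Finset.sum_congr rfl (fun k' (_ : k' ∈ Finset.univ) => by
              rw [hg0k k', ite_mul, one_mul, zero_mul])]
        rw [Finset.sum_ite_eq' Finset.univ k]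
        simp
      rw [hg00, zero_mul, zero_add, hsum2] at hle
      exact hle
    intro k
    refine (hB_le k).trans ?_
    -- EU2 τ ≤ A
    have hEU2 : EU2 N w W M σ τ
        = τ.g 0 * (∑ j, σ.q j * (-(((N:ℝ) * (w j:ℝ)) * (σ.r j + (1 - σ.r j) * τ.s j))))
          + ∑ k : Fin N, τ.g k.succ * (σ.q k * ((N:ℝ) * (M:ℝ)) - (W:ℝ) - (M:ℝ)) :=
      EU2_eq w W M σ τ hq1
    have hsum_le : ∑ k : Fin N, τ.g k.succ * (σ.q k * ((N:ℝ) * (M:ℝ)) - (W:ℝ) - (M:ℝ))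
        ≤ (∑ k : Fin N, τ.g k.succ) * EU2 N w W M σ τ := by
      rw [Finset.sum_mul]
      exact Finset.sum_le_sum fun k _ =>
        mul_le_mul_of_nonneg_left (hB_le k) (hg0 k.succ)
    have h1 : EU2 N w W M σ τ
        ≤ τ.g 0 * (∑ j, σ.q j * (-(((N:ℝ) * (w j:ℝ)) * (σ.r j + (1 - σ.r j) * τ.s j))))
          + (1 - τ.g 0) * EU2 N w W M σ τ := by
      have h2 : (∑ k : Fin N, τ.g k.succ) = 1 - τ.g 0 := by linarith
      rw [← h2]
      linarith [hsum_le, hEU2]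
    nlinarith [h1, hg0pos]
  -- Step 3 : the root constraints in terms of Z
  have hAZ : (∑ j, σ.q j * (-(((N:ℝ) * (w j:ℝ)) * (σ.r j + (1 - σ.r j) * τ.s j))))
      ≤ -(∑ j, ((N:ℝ) * σ.q j * σ.r j) * (w j:ℝ)) := by
    rw [← Finset.sum_neg_distrib]
    refine Finset.sum_le_sum fun j _ => ?_
    have h1 := hq0 j; have h2 := (hr j).1; have h3 := (hr j).2
    have h4 := (hs j).1
    have h5 : (0:ℝ) ≤ (w j:ℝ) := Nat.cast_nonneg _
    have h6 : (0:ℝ) ≤ 1 - σ.r j := by linarith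
    have hX : (0:ℝ) ≤ (N:ℝ) * (σ.q j * ((w j:ℝ) * ((1 - σ.r j) * τ.s j))) :=
      mul_nonneg hNR.le (mul_nonneg h1 (mul_nonneg h5 (mul_nonneg h6 h4)))
    linarith [hX]
  have hkey : ∀ k, (M:ℝ) * ((N:ℝ) * σ.q k)
      ≤ (M:ℝ) + ((W:ℝ) - ∑ j, ((N:ℝ) * σ.q j * σ.r j) * (w j:ℝ)) := by
    intro k
    have h := (hBA k).trans hAZ
    have h2 : (M:ℝ) * ((N:ℝ) * σ.q k) = σ.q k * ((N:ℝ)*(M:ℝ)) := by ring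
    rw [h2]
    linarith [h]
  have hZ0 : 0 ≤ ∑ j, ((N:ℝ) * σ.q j * σ.r j) * (w j:ℝ) :=
    Finset.sum_nonneg fun j _ => by
      have h1 := hq0 j; have h2 := (hr j).1
      have h5 : (0:ℝ) ≤ (w j:ℝ) := Nat.cast_nonneg _
      positivity
  have hZW : (∑ j, ((N:ℝ) * σ.q j * σ.r j) * (w j:ℝ)) ≤ (W:ℝ) := by
    have hne : (Finset.univ : Finset (Fin N)).Nonempty := ⟨i₀, Finset.mem_univ _⟩
    have hsum : ∑ i : Fin N, (N:ℝ)⁻¹ ≤ ∑ i, σ.q i := by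
      rw [hq1, Finset.sum_const, Finset.card_univ, Fintype.card_fin, nsmul_eq_mul]
      rw [mul_inv_cancel₀ (ne_of_gt hNR)]
    obtain ⟨k₀, -, hk₀⟩ := Finset.exists_le_of_sum_le hne hsum
    have := hkey k₀
    have h1 : (M:ℝ) ≤ (M:ℝ) * ((N:ℝ) * σ.q k₀) := by
      have h2 : (1:ℝ) ≤ (N:ℝ) * σ.q k₀ := by
        rw [show (1:ℝ) = (N:ℝ) * (N:ℝ)⁻¹ from (mul_inv_cancel₀ (ne_of_gt hNR)).symm]
        exact mul_le_mul_of_nonneg_left hk₀ (le_of_lt hNR)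
      nlinarith
    linarith
  set Z := ∑ j, ((N:ℝ) * σ.q j * σ.r j) * (w j:ℝ) with hZdef
  -- Step 6 : lower bound on N * q k
  have hlow : ∀ k, (M:ℝ) - ((N:ℝ) - 1) * ((W:ℝ) - Z) ≤ (M:ℝ) * ((N:ℝ) * σ.q k) := by
    intro k
    have hsumall : ∑ j, (M:ℝ) * ((N:ℝ) * σ.q j) = (M:ℝ) * (N:ℝ) := by
      rw [← Finset.mul_sum, ← Finset.mul_sum, hq1, mul_one]
    have hsplit : (M:ℝ) * ((N:ℝ) * σ.q k)
        = (M:ℝ) * (N:ℝ) - ∑ j ∈ Finset.univ.erase k, (M:ℝ) * ((N:ℝ) * σ.q j) := by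
      rw [Finset.sum_erase_eq_sub (Finset.mem_univ k), hsumall]; ring
    have hcard : ((Finset.univ.erase k).card : ℝ) = (N:ℝ) - 1 := by
      rw [Finset.card_erase_of_mem (Finset.mem_univ k), Finset.card_univ, Fintype.card_fin]
      rw [Nat.cast_sub hN]
      simp
    have herase : ∑ j ∈ Finset.univ.erase k, (M:ℝ) * ((N:ℝ) * σ.q j)
        ≤ ((N:ℝ) - 1) * ((M:ℝ) + ((W:ℝ) - Z)) := by
      calc ∑ j ∈ Finset.univ.erase k, (M:ℝ) * ((N:ℝ) * σ.q j)
          ≤ ∑ _j ∈ Finset.univ.erase k, ((M:ℝ) + ((W:ℝ) - Z)) :=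
            Finset.sum_le_sum fun j _ => hkey j
        _ = ((N:ℝ) - 1) * ((M:ℝ) + ((W:ℝ) - Z)) := by
            rw [Finset.sum_const, nsmul_eq_mul, hcard]
    rw [hsplit]
    nlinarith [herase]
  -- the support set S
  set S : Finset (Fin N) := Finset.univ.filter (fun i => σ.q i * τ.s i ≠ 0) with hSdef
  have hrS : ∀ i ∈ S, σ.r i = 1 := by
    intro i hi
    have hqs : σ.q i * τ.s i ≠ 0 := (Finset.mem_filter.mp hi).2
    have h1 := hstep1 i
    rcases mul_eq_zero.mp h1 with h | h
    · exact absurd (by rw [h, zero_mul]) hqs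
    · rcases mul_eq_zero.mp h with h' | h'
      · linarith [h']
      · exact absurd (by rw [h', mul_zero]) hqs
  -- payoff bound
  have hg0le1 : τ.g 0 ≤ 1 := by
    rw [← hg1]
    exact Finset.single_le_sum (fun k _ => hg0 k) (Finset.mem_univ 0)
  have hP : EU1 N v σ τ ≤ ∑ i ∈ S, ((N:ℝ) * σ.q i) * (v i:ℝ) := by
    rw [EU1_eq]
    have hzero : ∀ i ∈ Finset.univ, i ∉ S → σ.q i * (τ.s i * ((N:ℝ) * (v i:ℝ))) = 0 := by
      intro i _ hi
      have : σ.q i * τ.s i = 0 := by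
        by_contra hne
        exact hi (Finset.mem_filter.mpr ⟨Finset.mem_univ _, hne⟩)
      calc σ.q i * (τ.s i * ((N:ℝ) * (v i:ℝ)))
          = (σ.q i * τ.s i) * ((N:ℝ) * (v i:ℝ)) := by ring
        _ = 0 := by rw [this, zero_mul]
    rw [← Finset.sum_subset (Finset.subset_univ S) hzero]
    have hSnn : 0 ≤ ∑ i ∈ S, σ.q i * (τ.s i * ((N:ℝ) * (v i:ℝ))) :=
      Finset.sum_nonneg fun i _ => by
        have h1 := hq0 i; have h2 := (hs i).1
        have h3 : (0:ℝ) ≤ (v i:ℝ) := Nat.cast_nonneg _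
        positivity
    calc τ.g 0 * ∑ i ∈ S, σ.q i * (τ.s i * ((N:ℝ) * (v i:ℝ)))
        ≤ ∑ i ∈ S, σ.q i * (τ.s i * ((N:ℝ) * (v i:ℝ))) :=
          mul_le_of_le_one_left hSnn hg0le1
      _ ≤ ∑ i ∈ S, ((N:ℝ) * σ.q i) * (v i:ℝ) := by
          refine Finset.sum_le_sum fun i _ => ?_
          have h1 := hq0 i; have h2 := (hs i).1; have h3 := (hs i).2
          have h4 : (0:ℝ) ≤ (v i:ℝ) := Nat.cast_nonneg _
          have h6 : (0:ℝ) ≤ 1 - τ.s i := by linarith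
          have hX : (0:ℝ) ≤ (N:ℝ) * (σ.q i * ((v i:ℝ) * (1 - τ.s i))) :=
            mul_nonneg hNR.le (mul_nonneg h1 (mul_nonneg h4 h6))
          linarith [hX]
  -- weight bound
  have hWt : ∑ i ∈ S, ((N:ℝ) * σ.q i) * (w i:ℝ) ≤ Z := by
    rw [hZdef]
    have : ∀ i ∈ S, ((N:ℝ) * σ.q i) * (w i:ℝ) = ((N:ℝ) * σ.q i * σ.r i) * (w i:ℝ) := by
      intro i hi
      rw [hrS i hi, mul_one]
    rw [Finset.sum_congr rfl this]
    refine Finset.sum_le_sum_of_subset_of_nonneg (Finset.subset_univ S) fun j _ _ => ?_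
    have h1 := hq0 j; have h2 := (hr j).1
    have h5 : (0:ℝ) ≤ (w j:ℝ) := Nat.cast_nonneg _
    positivity
  rcases eq_or_lt_of_le hZW with hZeq | hZlt
  · -- case Z = W (no slack)
    have hub : ∀ i, (N:ℝ) * σ.q i ≤ 1 := by
      intro i
      have h1 : (M:ℝ) * ((N:ℝ) * σ.q i) ≤ (M:ℝ) * 1 := by
        rw [mul_one]; linarith [hkey i, hZeq]
      exact le_of_mul_le_mul_left h1 hMR
    have hlb : ∀ i, (1:ℝ) ≤ (N:ℝ) * σ.q i := by
      intro i
      have h1 : (M:ℝ) * 1 ≤ (M:ℝ) * ((N:ℝ) * σ.q i) := by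
        have h0 : ((N:ℝ) - 1) * ((W:ℝ) - Z) = 0 := by rw [hZeq]; ring
        rw [mul_one]; linarith [hlow i, h0]
      exact le_of_mul_le_mul_left h1 hMR
    have hSw : (∑ i ∈ S, w i) ≤ W := by
      have hr1 : ∑ i ∈ S, (w i:ℝ) ≤ ∑ i ∈ S, ((N:ℝ) * σ.q i) * (w i:ℝ) :=
        Finset.sum_le_sum fun i _ => by
          have h5 : (0:ℝ) ≤ (w i:ℝ) := Nat.cast_nonneg _
          have := mul_le_mul_of_nonneg_right (hlb i) h5
          linarith [this]
      have hc : ((∑ i ∈ S, w i : ℕ):ℝ) ≤ (W:ℝ) := by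
        rw [Nat.cast_sum]; linarith [hr1, hWt, hZeq]
      exact_mod_cast hc
    calc EU1 N v σ τ ≤ ∑ i ∈ S, ((N:ℝ) * σ.q i) * (v i:ℝ) := hP
      _ ≤ ∑ i ∈ S, (v i:ℝ) := Finset.sum_le_sum fun i _ => by
          have h4 : (0:ℝ) ≤ (v i:ℝ) := Nat.cast_nonneg _
          have := mul_le_mul_of_nonneg_right (hub i) h4
          linarith [this]
      _ = ((∑ i ∈ S, v i : ℕ):ℝ) := (Nat.cast_sum _ _).symm
      _ ≤ ((knapsackOpt N W w v : ℕ) : ℝ) := hfeas S hSw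
  · -- case Z < W (positive slack)
    have hW0 : (0:ℝ) < (W:ℝ) := lt_of_le_of_lt hZ0 hZlt
    have hWpos : 0 < W := by exact_mod_cast hW0
    have hW1 : (1:ℝ) ≤ (W:ℝ) := by exact_mod_cast hWpos
    have hN1 : (1:ℝ) ≤ (N:ℝ) := by exact_mod_cast hN
    have hNW : (W:ℝ) * (N:ℝ) < (M:ℝ) := by
      have h2 : W * N ≤ W * N * v i₀ := Nat.le_mul_of_pos_right _ (hv i₀)
      have h3 : W * N < M := lt_of_le_of_lt h2 (hM i₀).1
      exact_mod_cast h3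
    have hpos : 0 < (M:ℝ) - ((N:ℝ) - 1) * ((W:ℝ) - Z) := by
      have h1 : ((N:ℝ) - 1) * ((W:ℝ) - Z) ≤ ((N:ℝ) - 1) * (W:ℝ) :=
        mul_le_mul_of_nonneg_left (by linarith) (by linarith : (0:ℝ) ≤ (N:ℝ) - 1)
      linarith [h1, hNW, hW1, hW0]
    -- the items in S have total weight strictly less than W
    have e1 : ((M:ℝ) - ((N:ℝ) - 1) * ((W:ℝ) - Z)) * ∑ i ∈ S, (w i:ℝ) ≤ (M:ℝ) * Z := by
      calc ((M:ℝ) - ((N:ℝ) - 1) * ((W:ℝ) - Z)) * ∑ i ∈ S, (w i:ℝ)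
          = ∑ i ∈ S, ((M:ℝ) - ((N:ℝ) - 1) * ((W:ℝ) - Z)) * (w i:ℝ) := Finset.mul_sum _ _ _
        _ ≤ ∑ i ∈ S, ((M:ℝ) * ((N:ℝ) * σ.q i)) * (w i:ℝ) :=
            Finset.sum_le_sum fun i _ => by
              have h5 : (0:ℝ) ≤ (w i:ℝ) := Nat.cast_nonneg _
              exact mul_le_mul_of_nonneg_right (hlow i) h5
        _ = (M:ℝ) * ∑ i ∈ S, ((N:ℝ) * σ.q i) * (w i:ℝ) := by
            rw [Finset.mul_sum]
            exact Finset.sum_congr rfl fun i _ => by ring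
        _ ≤ (M:ℝ) * Z := mul_le_mul_of_nonneg_left hWt hMR.le
    have e2 : (M:ℝ) * Z < ((M:ℝ) - ((N:ℝ) - 1) * ((W:ℝ) - Z)) * (W:ℝ) := by
      have h3 : ((N:ℝ) - 1) * (W:ℝ) < (M:ℝ) := by nlinarith [hNW, hW1]
      have h4 := mul_lt_mul_of_pos_right h3 (by linarith : (0:ℝ) < (W:ℝ) - Z)
      nlinarith [h4]
    have e3 : ∑ i ∈ S, (w i:ℝ) < (W:ℝ) :=
      lt_of_mul_lt_mul_left (lt_of_le_of_lt e1 e2) hpos.le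
    have hSwlt : (∑ i ∈ S, w i) < W := by
      have hc : ((∑ i ∈ S, w i : ℕ):ℝ) < (W:ℝ) := by rw [Nat.cast_sum]; exact e3
      exact_mod_cast hc
    -- there is a unit item outside S
    have hU : ∃ u ∈ Finset.univ.filter (fun i => w i = 1 ∧ v i = 1), u ∉ S := by
      by_contra hcon
      push_neg at hcon
      have hsub : (Finset.univ.filter (fun i => w i = 1 ∧ v i = 1)) ⊆ S :=
        fun u hu => hcon u hu
      have h1 : (Finset.univ.filter (fun i => w i = 1 ∧ v i = 1)).card
          = ∑ u ∈ Finset.univ.filter (fun i => w i = 1 ∧ v i = 1), w u := by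
        rw [Finset.card_eq_sum_ones]
        exact Finset.sum_congr rfl fun u hu => ((Finset.mem_filter.mp hu).2.1).symm
      have h2 : ∑ u ∈ Finset.univ.filter (fun i => w i = 1 ∧ v i = 1), w u ≤ ∑ u ∈ S, w u :=
        Finset.sum_le_sum_of_subset hsub
      omega
    obtain ⟨u, hu, huS⟩ := hU
    obtain ⟨hwu, hvu⟩ := (Finset.mem_filter.mp hu).2
    have hJw' : ∑ i ∈ insert u S, w i ≤ W := by
      rw [Finset.sum_insert huS, hwu]; omega
    have hJv := hfeas _ hJw'
    rw [Finset.sum_insert huS, hvu] at hJv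
    -- bound on the total value
    have hMv : (W:ℝ) * (∑ i, (v i:ℝ)) < (M:ℝ) := by
      obtain ⟨i₁, -, hi₁⟩ :=
        Finset.exists_max_image Finset.univ v ⟨i₀, Finset.mem_univ _⟩
      have h1 : ∑ i, v i ≤ N * v i₁ := by
        calc ∑ i, v i ≤ Finset.univ.card • v i₁ :=
              Finset.sum_le_card_nsmul _ _ _ (fun x _ => hi₁ x (Finset.mem_univ x))
          _ = N * v i₁ := by rw [Finset.card_univ, Fintype.card_fin, smul_eq_mul]
      have h2 : W * (∑ i, v i) ≤ W * (N * v i₁) := Nat.mul_le_mul_left _ h1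
      have h3 : W * (N * v i₁) < M := by rw [← mul_assoc]; exact (hM i₁).1
      have h4 : W * (∑ i, v i) < M := lt_of_le_of_lt h2 h3
      calc (W:ℝ) * (∑ i, (v i:ℝ)) = ((W * ∑ i, v i : ℕ):ℝ) := by push_cast; ring
        _ < (M:ℝ) := by exact_mod_cast h4
    have e4 : (M:ℝ) * (∑ i ∈ S, ((N:ℝ) * σ.q i) * (v i:ℝ))
        ≤ (M:ℝ) * (∑ i ∈ S, (v i:ℝ)) + ((W:ℝ) - Z) * (∑ i ∈ S, (v i:ℝ)) := by
      have h1 : (M:ℝ) * (∑ i ∈ S, ((N:ℝ) * σ.q i) * (v i:ℝ))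
          = ∑ i ∈ S, ((M:ℝ) * ((N:ℝ) * σ.q i)) * (v i:ℝ) := by
        rw [Finset.mul_sum]
        exact Finset.sum_congr rfl fun i _ => by ring
      have h2 : ∑ i ∈ S, ((M:ℝ) * ((N:ℝ) * σ.q i)) * (v i:ℝ)
          ≤ ∑ i ∈ S, ((M:ℝ) + ((W:ℝ) - Z)) * (v i:ℝ) :=
        Finset.sum_le_sum fun i _ => by
          have h4 : (0:ℝ) ≤ (v i:ℝ) := Nat.cast_nonneg _
          exact mul_le_mul_of_nonneg_right (hkey i) h4
      have h3 : ∑ i ∈ S, ((M:ℝ) + ((W:ℝ) - Z)) * (v i:ℝ)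
          = (M:ℝ) * (∑ i ∈ S, (v i:ℝ)) + ((W:ℝ) - Z) * (∑ i ∈ S, (v i:ℝ)) := by
        rw [← Finset.mul_sum]
        ring
      rw [h1]
      exact h2.trans_eq h3
    have e5 : ((W:ℝ) - Z) * (∑ i ∈ S, (v i:ℝ)) < (M:ℝ) := by
      have h0 : ∑ i ∈ S, (v i:ℝ) ≤ ∑ i, (v i:ℝ) :=
        Finset.sum_le_sum_of_subset_of_nonneg (Finset.subset_univ S)
          (fun i _ _ => Nat.cast_nonneg _)
      have hv0 : (0:ℝ) ≤ ∑ i ∈ S, (v i:ℝ) := Finset.sum_nonneg fun i _ => Nat.cast_nonneg _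
      have h1 : ((W:ℝ) - Z) * (∑ i ∈ S, (v i:ℝ)) ≤ (W:ℝ) * (∑ i ∈ S, (v i:ℝ)) :=
        mul_le_mul_of_nonneg_right (by linarith) hv0
      have h2 : (W:ℝ) * (∑ i ∈ S, (v i:ℝ)) ≤ (W:ℝ) * (∑ i, (v i:ℝ)) :=
        mul_le_mul_of_nonneg_left h0 (by linarith)
      linarith [hMv]
    have e6 : (M:ℝ) * (∑ i ∈ S, ((N:ℝ) * σ.q i) * (v i:ℝ))
        < (M:ℝ) * ((∑ i ∈ S, (v i:ℝ)) + 1) := by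
      have hexp : (M:ℝ) * ((∑ i ∈ S, (v i:ℝ)) + 1)
          = (M:ℝ) * (∑ i ∈ S, (v i:ℝ)) + (M:ℝ) := by ring
      linarith [e4, e5]
    have e7 : (∑ i ∈ S, ((N:ℝ) * σ.q i) * (v i:ℝ)) < (∑ i ∈ S, (v i:ℝ)) + 1 :=
      lt_of_mul_lt_mul_left e6 hMR.le
    have c5 : ((∑ i ∈ S, v i : ℕ):ℝ) = ∑ i ∈ S, (v i:ℝ) := Nat.cast_sum _ _
    have c6 : ((1 + ∑ i ∈ S, v i : ℕ):ℝ) = 1 + ((∑ i ∈ S, v i : ℕ):ℝ) := by push_cast; ring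
    linarith [hP, e7, hJv, c5, c6]

/-- For a Knapsack instance with unit-items, the leader's Stackelberg
value of the associated concurrent-move game tree in behavioral strategies (with follower
best responses and ties broken in favor of the leader) equals the optimal value
`max { Σ_{i∈J} v i : J ⊆ {1,…,N}, Σ_{i∈J} w i ≤ W }` of the Knapsack instance. -/
theorem stackelberg_value_eq_knapsackOpt
    (N W K M : ℕ) (hN : 0 < N) (w v : Fin N → ℕ)
    (hw : ∀ i, 0 < w i) (hv : ∀ i, 0 < v i)
    (hunit : W ≤ (Finset.univ.filter fun i => w i = 1 ∧ v i = 1).card)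
    (hM : IsLeast {m : ℕ | ∀ i, W * N * v i < m ∧ N * w i < m} M) :
    IsGreatest
      {x : ℝ | ∃ (σ : LStrat N) (τ : FStrat N),
        LValid σ ∧ BestResponse N w W M σ τ ∧ x = EU1 N v σ τ}
      ((knapsackOpt N W w v : ℕ) : ℝ) := by
  constructor
  · -- the optimum is attained
    have hne : (Finset.univ.filter fun J : Finset (Fin N) => (∑ i ∈ J, w i) ≤ W).Nonempty :=
      ⟨∅, Finset.mem_filter.mpr ⟨Finset.mem_univ _, by simp⟩⟩
    obtain ⟨J, hJmem, hJeq⟩ := Finset.exists_mem_eq_sup _ hne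
      (fun J : Finset (Fin N) => ∑ i ∈ J, v i)
    have hJfeas : (∑ i ∈ J, w i) ≤ W := (Finset.mem_filter.mp hJmem).2
    obtain ⟨σ, τ, h1, h2, h3⟩ := achieve N W M hN w v J hJfeas
    refine ⟨σ, τ, h1, h2, ?_⟩
    rw [h3]
    norm_cast
  · -- it is an upper bound
    rintro x ⟨σ, τ, h1, h2, rfl⟩
    exact EU1_le_opt N W M hN w v hw hv hunit (fun i => hM.1 i) σ τ h1 h2

end KnapsackGame
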